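/- arXiv:2501.00265 — 2 statements merged into one kernel-verified Lean document; each statement's English description precedes it below -/
import Mathlib

section
/- Let σ: ℝ≥0 → ℝ be differentiable with σ'(r) ∈ (0,1] for all r > 0 and σ'' < 0 (so σ' is strictly decreasing and invertible). Define Φ(u) = σ((σ')⁻¹(u)) - u·(σ')⁻¹(u) for u in the range of σ'. Then for every r > 0, min_{u ∈ range(σ')} [u·r + Φ(u)] = σ(r), and the minimum is attained at u = σ'(r). -/
open Filter Topology Set

lemma tangent_line_bound (σ : ℝ → ℝ)
    (hσ : Differentiable ℝ σ)
    (hconc : ∀ r > 0, deriv (deriv σ) r < 0)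
    {s r : ℝ} (hs : 0 < s) (hr : 0 < r) :
    σ r - σ s ≤ deriv σ s * (r - s) := by
  have hdiff : ∀ x ∈ Set.Ioi (0:ℝ), DifferentiableAt ℝ (deriv σ) x := by
    intro x hx
    by_contra h
    exact (hconc x hx).ne (deriv_zero_of_not_differentiableAt h)
  have hanti : StrictAntiOn (deriv σ) (Set.Ioi 0) := by
    apply strictAntiOn_of_deriv_neg (convex_Ioi 0)
    · exact fun x hx => (hdiff x hx).continuousAt.continuousWithinAt
    · rw [interior_Ioi]; exact fun x hx => hconc x hx
  rcases lt_trichotomy s r with h | h | h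
  · obtain ⟨c, hc, hceq⟩ := exists_hasDerivAt_eq_slope σ (deriv σ) h
      (hσ.continuous.continuousOn) (fun x _ => (hσ x).hasDerivAt)
    have hc0 : 0 < c := lt_trans hs hc.1
    have hle : deriv σ c ≤ deriv σ s := le_of_lt (hanti hs hc0 hc.1)
    rw [hceq] at hle
    have := (div_le_iff₀ (by linarith : (0:ℝ) < r - s)).mp hle
    linarith
  · simp [h]
  · obtain ⟨c, hc, hceq⟩ := exists_hasDerivAt_eq_slope σ (deriv σ) h
      (hσ.continuous.continuousOn) (fun x _ => (hσ x).hasDerivAt)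
    have hc0 : 0 < c := lt_trans hr hc.1
    have hle : deriv σ s ≤ deriv σ c := le_of_lt (hanti hc0 hs hc.2)
    rw [hceq] at hle
    have := (le_div_iff₀ (by linarith : (0:ℝ) < s - r)).mp hle
    linarith

/-- Modified Black-Rangarajan duality: for a robust kernel σ with σ' ∈ (0,1] and
σ'' < 0 on (0,∞), and g a left inverse of σ' on (0,∞), the minimum over
u ∈ range σ' of u·r + Φ(u), with Φ(u) = σ(g u) - u·g u, equals σ(r), attained
at u = σ'(r). -/
theorem stmt_0 (σ g : ℝ → ℝ)
    (hσ : Differentiable ℝ σ)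
    (hd : ∀ r > 0, deriv σ r ∈ Set.Ioc (0:ℝ) 1)
    (hconc : ∀ r > 0, deriv (deriv σ) r < 0)
    (hg : ∀ r > 0, g (deriv σ r) = r)
    (r : ℝ) (hr : 0 < r) :
    IsMinOn (fun u => u * r + (σ (g u) - u * g u)) (deriv σ '' Set.Ioi 0) (deriv σ r)
      ∧ deriv σ r * r + (σ (g (deriv σ r)) - deriv σ r * g (deriv σ r)) = σ r := by
  have hgr := hg r hr
  constructor
  · intro x hx
    obtain ⟨s, hs, rfl⟩ := hx
    simp only [Set.mem_setOf_eq, hgr, hg s hs]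
    have := tangent_line_bound σ hσ hconc hs hr
    nlinarith [this]
  · rw [hgr]; ring
end

section
/- Let gᵢ ∈ ℝᵈ for i = 1,…,n, of which an outlier subset O of size n_O has gᵢ = vᵢ + hᵢ with (1/n_O)·Σ_{i∈O} hᵢ = 0, and for the inlier set gᵢ = vᵢ. Let ḡ = (1/n)Σᵢ vᵢ and assume for each outlier i, ‖hᵢ‖ ≥ ‖vᵢ‖ and ‖hᵢ‖ ≥ 1. Then for a uniformly random index i: E_i[‖η·gᵢ - η·ḡ‖²] ≤ η²·E_i[‖vᵢ‖²] - η²‖ḡ‖² + 3η²·(n_O/n)·(1/n_O)·Σ_{i∈O}‖hᵢ‖². -/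
/-!
Centre the observed gradients at their mean: since the outlier perturbations sum to zero, the
observed gradients have the same mean `ḡ` as the clean ones, so the variance identity gives
`∑ ‖gᵢ - ḡ‖² = ∑ ‖gᵢ‖² - n ‖ḡ‖²`. For an outlier, `‖hᵢ‖ ≥ ‖vᵢ‖` turns the cross term of
`‖vᵢ + hᵢ‖²` into at most `2 ‖hᵢ‖²`, whence `‖gᵢ‖² ≤ ‖vᵢ‖² + 3 ‖hᵢ‖²`.
-/

open Finset

theorem sum_norm_sub_sq_of_sum_eq_card_smul {ι E : Type*} [NormedAddCommGroup E]
    [InnerProductSpace ℝ E] (s : Finset ι) (x : ι → E) {c : E}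
    (hc : ∑ i ∈ s, x i = (#s : ℝ) • c) :
    ∑ i ∈ s, ‖x i - c‖ ^ 2 = ∑ i ∈ s, ‖x i‖ ^ 2 - #s * ‖c‖ ^ 2 := by
  simp only [norm_sub_sq_real, sum_add_distrib, sum_sub_distrib, ← mul_sum, ← sum_inner, hc,
    real_inner_smul_left, real_inner_self_eq_norm_sq, sum_const, nsmul_eq_mul]
  ring

theorem norm_add_sq_le_of_norm_le {E : Type*} [SeminormedAddGroup E] {v h : E}
    (hvh : ‖v‖ ≤ ‖h‖) : ‖v + h‖ ^ 2 ≤ ‖v‖ ^ 2 + 3 * ‖h‖ ^ 2 := by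
  nlinarith [norm_add_le v h, norm_nonneg v, norm_nonneg (v + h)]

section Perturbation

variable {ι : Type*} [Fintype ι] [DecidableEq ι] {O : Finset ι}

theorem sum_eq_sum_of_perturbation {E : Type*} [AddCommGroup E] {g v h : ι → E}
    (hout : ∀ i ∈ O, g i = v i + h i) (hin : ∀ i ∉ O, g i = v i) (hh : ∑ i ∈ O, h i = 0) :
    ∑ i, g i = ∑ i, v i := by
  rw [← sum_add_sum_compl O g, ← sum_add_sum_compl O v, sum_congr rfl hout,
    sum_congr rfl fun i hi => hin i (mem_compl.mp hi), sum_add_distrib, hh, add_zero]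

theorem sum_norm_sq_le_of_perturbation {E : Type*} [SeminormedAddCommGroup E] {g v h : ι → E}
    (hout : ∀ i ∈ O, g i = v i + h i) (hin : ∀ i ∉ O, g i = v i)
    (hvh : ∀ i ∈ O, ‖v i‖ ≤ ‖h i‖) :
    ∑ i, ‖g i‖ ^ 2 ≤ ∑ i, ‖v i‖ ^ 2 + 3 * ∑ i ∈ O, ‖h i‖ ^ 2 := by
  have houtliers : ∑ i ∈ O, ‖g i‖ ^ 2 ≤ ∑ i ∈ O, ‖v i‖ ^ 2 + 3 * ∑ i ∈ O, ‖h i‖ ^ 2 := by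
    rw [mul_sum, ← sum_add_distrib]
    exact sum_le_sum fun i hi => hout i hi ▸ norm_add_sq_le_of_norm_le (hvh i hi)
  have hinliers : ∑ i ∈ Oᶜ, ‖g i‖ ^ 2 = ∑ i ∈ Oᶜ, ‖v i‖ ^ 2 :=
    sum_congr rfl fun i hi => by rw [hin i (mem_compl.mp hi)]
  rw [← sum_add_sum_compl O, ← sum_add_sum_compl O fun i => ‖v i‖ ^ 2, hinliers]
  linarith

end Perturbation

theorem stmt_12_general (n d nO : ℕ) (hn : 0 < n) (hnO : 0 < nO)
    (O : Finset (Fin n))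
    (g v h : Fin n → EuclideanSpace ℝ (Fin d))
    (η : ℝ)
    (hout : ∀ i ∈ O, g i = v i + h i)
    (hin : ∀ i ∉ O, g i = v i)
    (hzero : (1 / (nO : ℝ)) • ∑ i ∈ O, h i = 0)
    (gbar : EuclideanSpace ℝ (Fin d))
    (hgbar : gbar = (1 / (n : ℝ)) • ∑ i, v i)
    (hlow1 : ∀ i ∈ O, ‖v i‖ ≤ ‖h i‖) :
    (1 / (n : ℝ)) * ∑ i, ‖η • g i - η • gbar‖ ^ 2
      ≤ η ^ 2 * ((1 / (n : ℝ)) * ∑ i, ‖v i‖ ^ 2) - η ^ 2 * ‖gbar‖ ^ 2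
        + 3 * η ^ 2 * ((nO : ℝ) / (n : ℝ)) * ((1 / (nO : ℝ)) * ∑ i ∈ O, ‖h i‖ ^ 2) := by
  have hn' : (n : ℝ) ≠ 0 := by positivity
  have hnO' : (nO : ℝ) ≠ 0 := by positivity
  have hsumh : ∑ i ∈ O, h i = 0 := (smul_eq_zero.mp hzero).resolve_left (by positivity)
  have hsumg : ∑ i, g i = (#(univ : Finset (Fin n)) : ℝ) • gbar := by
    rw [sum_eq_sum_of_perturbation hout hin hsumh, hgbar, card_univ, Fintype.card_fin, smul_smul,
      mul_one_div_cancel hn', one_smul]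
  have hvar := sum_norm_sub_sq_of_sum_eq_card_smul _ _ hsumg
  have hbound := sum_norm_sq_le_of_perturbation hout hin hlow1
  simp only [← smul_sub, norm_smul, mul_pow, Real.norm_eq_abs, sq_abs, ← mul_sum, hvar,
    card_univ, Fintype.card_fin]
  field_simp
  gcongr
  linarith

/-- Variance bound for SGD with batch size one under zero-mean additive outlier
perturbations (Lemma on variance in updates). -/
theorem stmt_12 (n d nO : ℕ) (hn : 0 < n) (hnO : 0 < nO)
    (O : Finset (Fin n)) (hOcard : O.card = nO)
    (g v h : Fin n → EuclideanSpace ℝ (Fin d))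
    (η : ℝ) (hη : 0 < η)
    (hout : ∀ i ∈ O, g i = v i + h i)
    (hin : ∀ i ∉ O, g i = v i)
    (hzero : (1 / (nO : ℝ)) • ∑ i ∈ O, h i = 0)
    (gbar : EuclideanSpace ℝ (Fin d))
    (hgbar : gbar = (1 / (n : ℝ)) • ∑ i, v i)
    (hlow1 : ∀ i ∈ O, ‖v i‖ ≤ ‖h i‖)
    (hlow2 : ∀ i ∈ O, (1:ℝ) ≤ ‖h i‖) :
    (1 / (n : ℝ)) * ∑ i, ‖η • g i - η • gbar‖ ^ 2
      ≤ η ^ 2 * ((1 / (n : ℝ)) * ∑ i, ‖v i‖ ^ 2) - η ^ 2 * ‖gbar‖ ^ 2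
        + 3 * η ^ 2 * ((nO : ℝ) / (n : ℝ)) * ((1 / (nO : ℝ)) * ∑ i ∈ O, ‖h i‖ ^ 2) :=
  stmt_12_general n d nO hn hnO O g v h η hout hin hzero gbar hgbar hlow1
end
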